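/- Let X be a perfectly normal Hausdorff topological space and let C be the set of all continuous functions X → ℝ. Then C is a constructible ℓ-group, i.e., C satisfies (C1), (C2), (C3) and (C4). -/

import Mathlib

/-! In a perfectly normal space every closed set is the zero set of a continuous function, hence a
`C`-zero set; this gives (C1), and (C2) because closures are closed. (C3) is the Tietze extension
theorem, and (C4) is the pasting lemma for a finite closed cover. -/

open Set

variable {X : Type*} [TopologicalSpace X]

/-- A `C`-zero set: the zero set of a member of `C`. -/
def IsZeroSetOf (C : Set (X → ℝ)) (Z : Set X) : Prop := ∃ f ∈ C, Z = {x | f x = 0}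

/-- A `C`-cozero set: the complement of a `C`-zero set. -/
def IsCozeroSetOf (C : Set (X → ℝ)) (U : Set X) : Prop := ∃ f ∈ C, U = {x | f x ≠ 0}

/-- A `C`-constructible set: a finite Boolean combination of `C`-zero sets. -/
inductive IsConstructibleIn (C : Set (X → ℝ)) : Set X → Prop
  | zeroSet {Z : Set X} : IsZeroSetOf C Z → IsConstructibleIn C Z
  | compl {Z : Set X} : IsConstructibleIn C Z → IsConstructibleIn C Zᶜ
  | union {Z W : Set X} : IsConstructibleIn C Z → IsConstructibleIn C W →
      IsConstructibleIn C (Z ∪ W)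

/-- A `C`-constructible function on `Z`: `Z` is covered by finitely many
`C`-constructible sets `Zs i` on each of which `g` agrees with a member of `C`. -/
def IsConstructibleFunOn (C : Set (X → ℝ)) (Z : Set X) (g : X → ℝ) : Prop :=
  ∃ (n : ℕ) (Zs : Fin n → Set X) (fs : Fin n → X → ℝ),
    (∀ i, IsConstructibleIn C (Zs i)) ∧ (⋃ i, Zs i) = Z ∧
    (∀ i, fs i ∈ C) ∧ (∀ i, ∀ x ∈ Zs i, g x = fs i x)

/-- (C1) Every closed `C`-constructible set is a `C`-zero set. -/
def CondC1 (C : Set (X → ℝ)) : Prop :=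
  ∀ Z : Set X, IsClosed Z → IsConstructibleIn C Z → IsZeroSetOf C Z

/-- (C2) The closure of every `C`-cozero set is `C`-constructible. -/
def CondC2 (C : Set (X → ℝ)) : Prop :=
  ∀ U : Set X, IsCozeroSetOf C U → IsConstructibleIn C (closure U)

/-- (C3) Every continuous `C`-constructible function on a closed
`C`-constructible set extends to a member of `C`. -/
def CondC3 (C : Set (X → ℝ)) : Prop :=
  ∀ A : Set X, IsClosed A → IsConstructibleIn C A →
    ∀ g : X → ℝ, ContinuousOn g A → IsConstructibleFunOn C A g →
      ∃ f ∈ C, ∀ x ∈ A, f x = g x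

/-- (C4) Glueing over finite closed `C`-constructible covers of `X`. -/
def CondC4 (C : Set (X → ℝ)) : Prop :=
  ∀ (n : ℕ) (A : Fin n → Set X), (∀ i, IsClosed (A i)) →
    (∀ i, IsConstructibleIn C (A i)) → (⋃ i, A i) = univ →
    ∀ f : X → ℝ, (∀ i, ContinuousOn f (A i) ∧ IsConstructibleFunOn C (A i) f) →
      f ∈ C

theorem IsClosed.isZeroSetOf_continuous [PerfectlyNormalSpace X] {Z : Set X} (hZ : IsClosed Z) :
    IsZeroSetOf {f : X → ℝ | Continuous f} Z := by
  obtain ⟨f, rfl, -⟩ := perfectlyNormalSpace_iff_forall_isClosed_preimage_zero.1 ‹_› Z hZ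
  exact ⟨f, f.continuous, rfl⟩

theorem condC1_continuous [PerfectlyNormalSpace X] : CondC1 {f : X → ℝ | Continuous f} :=
  fun _ hZ _ => hZ.isZeroSetOf_continuous

theorem condC2_continuous [PerfectlyNormalSpace X] : CondC2 {f : X → ℝ | Continuous f} :=
  fun _ _ => .zeroSet isClosed_closure.isZeroSetOf_continuous

theorem condC3_continuous [NormalSpace X] : CondC3 {f : X → ℝ | Continuous f} := by
  intro A hA _ g hg _
  obtain ⟨f, hf⟩ := ContinuousMap.exists_restrict_eq hA ⟨A.domRestrict g, hg.domRestrict⟩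
  exact ⟨f, f.continuous, fun x hx => congr($hf ⟨x, hx⟩)⟩

theorem condC4_continuous : CondC4 {f : X → ℝ | Continuous f} :=
  fun _ A hA _ hcover _ hf => (locallyFinite_of_finite A).continuous hcover hA fun i => (hf i).1

theorem stmt_8_general (X : Type*) [TopologicalSpace X] [PerfectlyNormalSpace X] :
    CondC1 {f : X → ℝ | Continuous f} ∧ CondC2 {f : X → ℝ | Continuous f} ∧
    CondC3 {f : X → ℝ | Continuous f} ∧ CondC4 {f : X → ℝ | Continuous f} :=
  ⟨condC1_continuous, condC2_continuous, condC3_continuous, condC4_continuous⟩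

/-- If `X` is a perfectly normal Hausdorff space, then the set `C`
of all continuous functions `X → ℝ` is a constructible ℓ-group, i.e. satisfies
(C1), (C2), (C3) and (C4). -/
theorem stmt_8 (X : Type*) [TopologicalSpace X] [T2Space X] [PerfectlyNormalSpace X] :
    CondC1 {f : X → ℝ | Continuous f} ∧ CondC2 {f : X → ℝ | Continuous f} ∧
    CondC3 {f : X → ℝ | Continuous f} ∧ CondC4 {f : X → ℝ | Continuous f} :=
  stmt_8_general X
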